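/- arXiv:2309.08920 — 2 statements merged into one kernel-verified Lean document; each statement's English description precedes it below -/
import Mathlib

section
/- Let J ⊆ Z_n with |J| = g > 0, and let c ∈ F_q^{nN} correspond to an n × N matrix Δ(c) = (b_{i,j}) (with c listing the matrix column by column). If for each i ∈ J the i-th row of Δ(c) has exactly ℓ nonzero entries, and all other rows of Δ(c) are zero, then the b-symbol weight of c (as a vector of length nN with cyclic indexing) satisfies w_b(c) ≥ ℓ·(g + Σ_{H hole of J, |H| ≤ b−1} |H| + Σ_{H hole of J, |H| ≥ b} (b−1)). -/
open scoped Classical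
open Finset

noncomputable def bwt {F : Type*} [Field F] (n b : ℕ) [NeZero n] (x : ZMod n → F) : ℕ :=
  (Finset.univ.filter (fun i : ZMod n => ∃ j < b, x (i + (j : ZMod n)) ≠ 0)).card

noncomputable def bDist {F : Type*} [Field F] (n b : ℕ) [NeZero n]
    (C : Set (ZMod n → F)) : ℕ :=
  sInf {w | ∃ u ∈ C, ∃ v ∈ C, u ≠ v ∧ bwt n b (u - v) = w}

def IsHole {n : ℕ} [NeZero n] (J H : Finset (ZMod n)) : Prop :=
  ∃ (a : ZMod n) (h : ℕ), 0 < h ∧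
    H = Finset.image (fun t : ℕ => a + (t : ZMod n) + 1) (Finset.range h) ∧
    (∀ x ∈ H, x ∉ J) ∧ a ∈ J ∧ a + (h : ZMod n) + 1 ∈ J

noncomputable def hSupp {F : Type*} [Field F] {n : ℕ} [NeZero n] (x : ZMod n → F) :
    Finset (ZMod n) :=
  Finset.univ.filter (fun i => x i ≠ 0)
instance neZeroMul {a b : ℕ} [NeZero a] [NeZero b] : NeZero (a * b) :=
  ⟨Nat.mul_ne_zero (NeZero.ne a) (NeZero.ne b)⟩

noncomputable def mpVec {F : Type*} [Field F] (n N M : ℕ) [NeZero n] [NeZero N]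
    (A : Matrix (Fin M) (Fin N) F) (c : Fin M → ZMod n → F) : ZMod (n * N) → F :=
  fun k => ∑ ℓ : Fin M, c ℓ ((k.val % n : ℕ) : ZMod n) *
    A ℓ ⟨k.val / n, Nat.div_lt_of_lt_mul (ZMod.val_lt k)⟩

def mpCode {F : Type*} [Field F] (n N M : ℕ) [NeZero n] [NeZero N]
    (A : Matrix (Fin M) (Fin N) F) (C : Fin M → Set (ZMod n → F)) :
    Set (ZMod (n * N) → F) :=
  {v | ∃ c : Fin M → ZMod n → F, (∀ ℓ, c ℓ ∈ C ℓ) ∧ v = mpVec n N M A c}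

noncomputable def minHamming {F : Type*} [Field F] {N : ℕ} (S : Set (Fin N → F)) : ℕ :=
  sInf {w | ∃ v ∈ S, v ≠ 0 ∧ hammingNorm v = w}

def NSC {F : Type*} [Field F] {M N : ℕ} (A : Matrix (Fin M) (Fin N) F) : Prop :=
  ∀ t : ℕ, 0 < t → ∀ htM : t ≤ M, ∀ g : Fin t → Fin N, StrictMono g →
    (Matrix.of (fun r c : Fin t => A (Fin.castLE htM r) (g c))).det ≠ 0

section Holes
variable {n : ℕ} [NeZero n] (J : Finset (ZMod n))

lemma gapD_exists (hJ : J.Nonempty) (i : ZMod n) : ∃ m : ℕ, 0 < m ∧ i - (m : ZMod n) ∈ J := by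
  obtain ⟨j0, hj0⟩ := hJ
  refine ⟨(i - j0).val + n, by have := Nat.pos_of_ne_zero (NeZero.ne n); omega, ?_⟩
  have : (((i - j0).val + n : ℕ) : ZMod n) = i - j0 := by
    push_cast
    simp [ZMod.natCast_val]
  rw [this]
  simpa using hj0

noncomputable def gapD (hJ : J.Nonempty) (i : ZMod n) : ℕ := Nat.find (gapD_exists J hJ i)

lemma gapD_pos (hJ : J.Nonempty) (i : ZMod n) : 0 < gapD J hJ i := (Nat.find_spec (gapD_exists J hJ i)).1

lemma gapD_mem (hJ : J.Nonempty) (i : ZMod n) : i - (gapD J hJ i : ZMod n) ∈ J :=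
  (Nat.find_spec (gapD_exists J hJ i)).2

lemma gapD_min (hJ : J.Nonempty) {i : ZMod n} {m : ℕ} (hm : 0 < m) (hlt : m < gapD J hJ i) :
    i - (m : ZMod n) ∉ J := fun h => Nat.find_min (gapD_exists J hJ i) hlt ⟨hm, h⟩

lemma gapD_le_n (hJ : J.Nonempty) {i : ZMod n} (hi : i ∈ J) : gapD J hJ i ≤ n := by
  apply Nat.find_le
  refine ⟨Nat.pos_of_ne_zero (NeZero.ne n), ?_⟩
  simpa using hi

/-- the length in a hole representation is less than `n`. -/
lemma hole_h_lt_n {a : ZMod n} {h : ℕ} (hh : 0 < h)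
    (hnot : ∀ x ∈ Finset.image (fun t : ℕ => a + (t : ZMod n) + 1) (Finset.range h), x ∉ J)
    (ha : a ∈ J) : h < n := by
  by_contra hcon
  push_neg at hcon
  have hn : 0 < n := Nat.pos_of_ne_zero (NeZero.ne n)
  have hmem : a ∈ Finset.image (fun t : ℕ => a + (t : ZMod n) + 1) (Finset.range h) := by
    refine Finset.mem_image.2 ⟨n - 1, Finset.mem_range.2 (by omega), ?_⟩
    have : ((n - 1 : ℕ) : ZMod n) + 1 = ((n : ℕ) : ZMod n) := by
      have : ((n - 1 : ℕ) : ZMod n) + ((1:ℕ) : ZMod n) = (((n-1) + 1 : ℕ) : ZMod n) := by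
        push_cast; ring
      simpa [Nat.sub_add_cancel hn] using this
    rw [add_assoc, this]
    simp
  exact hnot a hmem ha

lemma hole_card {a : ZMod n} {h : ℕ} (hlt : h < n) :
    (Finset.image (fun t : ℕ => a + (t : ZMod n) + 1) (Finset.range h)).card = h := by
  rw [Finset.card_image_of_injOn, Finset.card_range]
  intro t ht t' ht' he
  simp only [Finset.mem_coe, Finset.mem_range] at ht ht'
  have : (t : ZMod n) = (t' : ZMod n) := by
    have := he
    simpa [add_left_cancel_iff] using he
  have := congrArg ZMod.val this
  rwa [ZMod.val_cast_of_lt (by omega), ZMod.val_cast_of_lt (by omega)] at this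

lemma hole_rep_unique {a a' : ZMod n} {h h' : ℕ} (hh : 0 < h) (hh' : 0 < h')
    (heq : Finset.image (fun t : ℕ => a + (t : ZMod n) + 1) (Finset.range h)
         = Finset.image (fun t : ℕ => a' + (t : ZMod n) + 1) (Finset.range h'))
    (hnot : ∀ x ∈ Finset.image (fun t : ℕ => a + (t : ZMod n) + 1) (Finset.range h), x ∉ J)
    (ha : a ∈ J) (ha' : a' ∈ J) : a = a' ∧ h = h' := by
  have hltn : h < n := hole_h_lt_n J hh hnot ha
  have hltn' : h' < n := hole_h_lt_n J hh' (heq ▸ hnot) ha'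
  have hcard : h = h' := by
    have := hole_card (a := a) hltn
    rw [heq, hole_card hltn'] at this
    omega
  refine ⟨?_, hcard⟩
  have hmem : a + 1 ∈ Finset.image (fun t : ℕ => a' + (t : ZMod n) + 1) (Finset.range h') := by
    rw [← heq]
    exact Finset.mem_image.2 ⟨0, Finset.mem_range.2 hh, by simp⟩
  obtain ⟨t, ht, hte⟩ := Finset.mem_image.1 hmem
  have hat : a = a' + (t : ZMod n) := (add_right_cancel hte).symm
  rcases Nat.eq_zero_or_pos t with rfl | htpos
  · simpa using hat
  · exfalso
    have hmem2 : a ∈ Finset.image (fun t : ℕ => a' + (t : ZMod n) + 1) (Finset.range h') := by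
      have htlt : t < h' := Finset.mem_range.1 ht
      refine Finset.mem_image.2 ⟨t - 1, Finset.mem_range.2 (by omega), ?_⟩
      rw [hat]
      have : ((t - 1 : ℕ) : ZMod n) + 1 = (t : ZMod n) := by
        have : ((t - 1 : ℕ) : ZMod n) + ((1:ℕ) : ZMod n) = (((t-1)+1 : ℕ) : ZMod n) := by
          push_cast; ring
        simpa [Nat.sub_add_cancel htpos] using this
      rw [add_assoc, this]
    exact (heq ▸ hnot) a hmem2 ha


noncomputable def holeOf (hJ : J.Nonempty) (i : ZMod n) : Finset (ZMod n) :=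
  Finset.image (fun t : ℕ => (i - (gapD J hJ i : ZMod n)) + (t : ZMod n) + 1)
    (Finset.range (gapD J hJ i - 1))

lemma cast_sub_helper (i : ZMod n) (D m : ℕ) (hm : m ≤ D) :
    i - (D : ZMod n) + ((D - m : ℕ) : ZMod n) = i - (m : ZMod n) := by
  rw [Nat.cast_sub hm]; ring

lemma holeOf_elem (hJ : J.Nonempty) (i : ZMod n) {t : ℕ} (ht : t < gapD J hJ i - 1) :
    (i - (gapD J hJ i : ZMod n)) + (t : ZMod n) + 1
      = i - (((gapD J hJ i - (t+1)) : ℕ) : ZMod n) := by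
  set D := gapD J hJ i with hD
  have h1 : t + 1 ≤ D := by omega
  rw [Nat.cast_sub h1]
  push_cast
  ring

lemma isHole_holeOf (hJ : J.Nonempty) {i : ZMod n} (hi : i ∈ J)
    (h2 : 2 ≤ gapD J hJ i) : IsHole J (holeOf J hJ i) := by
  refine ⟨i - (gapD J hJ i : ZMod n), gapD J hJ i - 1, by omega, rfl, ?_, gapD_mem J hJ i, ?_⟩
  · intro x hx
    obtain ⟨t, ht, rfl⟩ := Finset.mem_image.1 hx
    rw [Finset.mem_range] at ht
    rw [holeOf_elem J hJ i ht]
    exact gapD_min J hJ (by omega) (by omega)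
  · have : (i - (gapD J hJ i : ZMod n)) + ((gapD J hJ i - 1 : ℕ) : ZMod n) + 1
        = i := by
      rw [Nat.cast_sub (by omega : 1 ≤ gapD J hJ i)]
      push_cast
      ring
    rw [this]; exact hi

lemma holeOf_card (hJ : J.Nonempty) {i : ZMod n} (hi : i ∈ J) :
    (holeOf J hJ i).card = gapD J hJ i - 1 := by
  apply hole_card
  have := gapD_le_n J hJ hi
  have := Nat.pos_of_ne_zero (NeZero.ne n)
  omega

lemma gapD_of_hole (hJ : J.Nonempty) {a : ZMod n} {h : ℕ} (hh : 0 < h)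
    (hnot : ∀ x ∈ Finset.image (fun t : ℕ => a + (t : ZMod n) + 1) (Finset.range h), x ∉ J)
    (ha : a ∈ J) (hah : a + (h : ZMod n) + 1 ∈ J) :
    gapD J hJ (a + (h : ZMod n) + 1) = h + 1 := by
  set i := a + (h : ZMod n) + 1 with hi
  have hkey : i - ((h + 1 : ℕ) : ZMod n) = a := by push_cast; ring
  have hle : gapD J hJ i ≤ h + 1 := by
    unfold gapD
    exact Nat.find_le ⟨by omega, by rw [hkey]; exact ha⟩
  have hge : h + 1 ≤ gapD J hJ i := by
    unfold gapD
    rw [Nat.le_find_iff]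
    intro m hm ⟨hm0, hmem⟩
    have him : i - (m : ZMod n) = a + ((h - m : ℕ) : ZMod n) + 1 := by
      rw [Nat.cast_sub (by omega : m ≤ h)]
      push_cast; ring
    apply hnot (i - (m : ZMod n)) _ hmem
    rw [him]
    exact Finset.mem_image.2 ⟨h - m, Finset.mem_range.2 (by omega), rfl⟩
  omega

lemma holeOf_of_hole (hJ : J.Nonempty) {a : ZMod n} {h : ℕ} (hh : 0 < h)
    (hnot : ∀ x ∈ Finset.image (fun t : ℕ => a + (t : ZMod n) + 1) (Finset.range h), x ∉ J)
    (ha : a ∈ J) (hah : a + (h : ZMod n) + 1 ∈ J) :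
    holeOf J hJ (a + (h : ZMod n) + 1)
      = Finset.image (fun t : ℕ => a + (t : ZMod n) + 1) (Finset.range h) := by
  have hg := gapD_of_hole J hJ hh hnot ha hah
  unfold holeOf
  rw [hg]
  have hkey : a + (h : ZMod n) + 1 - ((h + 1 : ℕ) : ZMod n) = a := by push_cast; ring
  simp only [hkey, Nat.add_sub_cancel]

/-- Main combinatorial identity. -/
lemma sum_holes (hJ : J.Nonempty) (f : ℕ → ℕ) (hf : f 0 = 0) :
    ∑ H ∈ Finset.univ.filter (fun H => IsHole J H), f H.card
      = ∑ i ∈ J, f (gapD J hJ i - 1) := by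
  rw [← Finset.sum_filter_add_sum_filter_not J (fun i => 2 ≤ gapD J hJ i)]
  have hz : ∑ i ∈ J.filter (fun i => ¬ 2 ≤ gapD J hJ i), f (gapD J hJ i - 1) = 0 := by
    apply Finset.sum_eq_zero
    intro i hi
    rw [Finset.mem_filter] at hi
    have := gapD_pos J hJ i
    have : gapD J hJ i = 1 := by omega
    rw [this]
    simpa using hf
  rw [hz, add_zero]
  symm
  apply Finset.sum_bij (fun i _ => holeOf J hJ i)
  · intro i hi
    rw [Finset.mem_filter] at hi
    exact Finset.mem_filter.2 ⟨Finset.mem_univ _, isHole_holeOf J hJ hi.1 hi.2⟩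
  · intro i hi i' hi' he
    rw [Finset.mem_filter] at hi hi'
    have h1 := isHole_holeOf J hJ hi.1 hi.2
    obtain ⟨_, _, _, heq1, hn1, _, _⟩ := h1
    have hu := hole_rep_unique J (a := i - (gapD J hJ i : ZMod n)) (h := gapD J hJ i - 1)
      (a' := i' - (gapD J hJ i' : ZMod n)) (h' := gapD J hJ i' - 1)
      (by omega) (by omega) (by rw [← holeOf, ← holeOf, he])
      (fun x hx => by
        obtain ⟨t, ht, rfl⟩ := Finset.mem_image.1 hx
        rw [Finset.mem_range] at ht
        rw [holeOf_elem J hJ i ht]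
        exact gapD_min J hJ (by omega) (by omega))
      (gapD_mem J hJ i) (gapD_mem J hJ i')
    obtain ⟨hae, hhe⟩ := hu
    have hD : gapD J hJ i = gapD J hJ i' := by omega
    have : i - (gapD J hJ i : ZMod n) + (gapD J hJ i : ZMod n)
        = i' - (gapD J hJ i' : ZMod n) + (gapD J hJ i' : ZMod n) := by
      rw [hae, hD]
    simpa using this
  · intro H hH
    rw [Finset.mem_filter] at hH
    obtain ⟨_, a, h, hh, heq, hnot, ha, hah⟩ := hH
    refine ⟨a + (h : ZMod n) + 1, Finset.mem_filter.2 ⟨hah, ?_⟩, ?_⟩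
    · rw [gapD_of_hole J hJ hh (heq ▸ hnot) ha hah]; omega
    · rw [holeOf_of_hole J hJ hh (heq ▸ hnot) ha hah, heq]
  · intro i hi
    rw [Finset.mem_filter] at hi
    rw [holeOf_card J hJ hi.1]

end Holes

/-- Lemma 3.1: if the rows of `Δ(c)` indexed by `J` each have
exactly `ℓ` nonzero entries and all other rows vanish, then
`w_b(c) ≥ ℓ(|J| + Σ_{H hole, |H| ≤ b-1}|H| + Σ_{H hole, |H| ≥ b}(b-1))`. -/
theorem stmt4 {F : Type*} [Field F] {n N : ℕ} [NeZero n] [NeZero N] (b ℓ : ℕ)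
    (hb1 : 1 ≤ b) (hbn : b ≤ n)
    (c : ZMod (n * N) → F) (J : Finset (ZMod n)) (hJ : J.Nonempty)
    (hrow : ∀ i : ZMod n, i ∈ J →
      (Finset.univ.filter
        (fun j : Fin N => c ((j.val * n + i.val : ℕ) : ZMod (n * N)) ≠ 0)).card = ℓ)
    (hzero : ∀ i : ZMod n, i ∉ J →
      ∀ j : Fin N, c ((j.val * n + i.val : ℕ) : ZMod (n * N)) = 0) :
    ℓ * (J.card
      + (∑ H ∈ Finset.univ.filter (fun H => IsHole J H ∧ H.card ≤ b - 1), H.card)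
      + (∑ _H ∈ Finset.univ.filter (fun H => IsHole J H ∧ b ≤ H.card), (b - 1)))
      ≤ bwt (n * N) b c := by
  have hnpos : 0 < n := Nat.pos_of_ne_zero (NeZero.ne n)
  have hNpos : 0 < N := Nat.pos_of_ne_zero (NeZero.ne N)
  have hMpos : 0 < n * N := Nat.mul_pos hnpos hNpos
  -- the row map
  set ρ : ZMod (n * N) → ZMod n := fun k => ZMod.castHom (dvd_mul_right n N) (ZMod n) k with hρ
  have hρval : ∀ k : ZMod (n * N), (ρ k).val = k.val % n := by
    intro k
    show (ZMod.castHom (dvd_mul_right n N) (ZMod n) k).val = k.val % n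
    rw [ZMod.castHom_apply, ← ZMod.natCast_val, ZMod.val_natCast]
  have hρsub : ∀ (k : ZMod (n * N)) (t : ℕ), ρ (k - (t : ZMod (n * N))) = ρ k - (t : ZMod n) := by
    intro k t
    show ZMod.castHom (dvd_mul_right n N) (ZMod n) (k - (t : ZMod (n * N)))
        = ZMod.castHom (dvd_mul_right n N) (ZMod n) k - (t : ZMod n)
    rw [map_sub, map_natCast]
  have hk_decomp : ∀ k : ZMod (n * N), ((k.val / n * n + (ρ k).val : ℕ) : ZMod (n * N)) = k := by
    intro k
    rw [hρval]
    have : k.val / n * n + k.val % n = k.val := by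
      rw [mul_comm]; exact Nat.div_add_mod k.val n
    rw [this]
    simp [ZMod.natCast_val]
  have hzero' : ∀ k : ZMod (n * N), ρ k ∉ J → c k = 0 := by
    intro k hk
    have := hzero (ρ k) hk ⟨k.val / n, Nat.div_lt_of_lt_mul (ZMod.val_lt k)⟩
    simpa [hk_decomp k] using this
  -- the support
  set supp : Finset (ZMod (n * N)) := Finset.univ.filter (fun k => c k ≠ 0) with hsupp
  have hsupp_row : ∀ p ∈ supp, ρ p ∈ J := by
    intro p hp
    by_contra hcon
    exact (Finset.mem_filter.1 hp).2 (hzero' p hcon)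
  -- row counts
  have hrow' : ∀ i ∈ J, (supp.filter (fun p => ρ p = i)).card = ℓ := by
    intro i hi
    rw [← hrow i hi]
    have hlt : ∀ j : Fin N, j.val * n + i.val < n * N := by
      intro j
      have h1 : j.val + 1 ≤ N := j.isLt
      have h2 : i.val < n := ZMod.val_lt i
      calc j.val * n + i.val < (j.val + 1) * n := by ring_nf; omega
      _ ≤ N * n := Nat.mul_le_mul_right n h1
      _ = n * N := Nat.mul_comm N n
    apply Finset.card_bij' (fun p _ => (⟨p.val / n, Nat.div_lt_of_lt_mul (ZMod.val_lt p)⟩ : Fin N))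
      (fun j _ => ((j.val * n + i.val : ℕ) : ZMod (n * N)))
    · intro p hp
      obtain ⟨hpsupp, hpi⟩ := Finset.mem_filter.1 hp
      have hcp : c p ≠ 0 := (Finset.mem_filter.1 hpsupp).2
      refine Finset.mem_filter.2 ⟨Finset.mem_univ _, ?_⟩
      show c ((p.val / n * n + i.val : ℕ) : ZMod (n * N)) ≠ 0
      rw [← hpi, hk_decomp p]
      exact hcp
    · intro j hj
      have hcj : c ((j.val * n + i.val : ℕ) : ZMod (n * N)) ≠ 0 := (Finset.mem_filter.1 hj).2
      have hval : (((j.val * n + i.val : ℕ) : ZMod (n * N))).val = j.val * n + i.val :=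
        ZMod.val_cast_of_lt (hlt j)
      refine Finset.mem_filter.2 ⟨Finset.mem_filter.2 ⟨Finset.mem_univ _, hcj⟩, ?_⟩
      apply ZMod.val_injective
      rw [hρval, hval, add_comm, Nat.add_mul_mod_self_right]
      exact Nat.mod_eq_of_lt (ZMod.val_lt i)
    · intro p hp
      obtain ⟨hpsupp, hpi⟩ := Finset.mem_filter.1 hp
      show ((p.val / n * n + i.val : ℕ) : ZMod (n * N)) = p
      rw [← hpi]
      exact hk_decomp p
    · intro j hj
      have hval : (((j.val * n + i.val : ℕ) : ZMod (n * N))).val = j.val * n + i.val :=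
        ZMod.val_cast_of_lt (hlt j)
      apply Fin.ext
      show (((j.val * n + i.val : ℕ) : ZMod (n * N))).val / n = j.val
      rw [hval, add_comm, Nat.add_mul_div_right _ _ hnpos, Nat.div_eq_of_lt (ZMod.val_lt i)]
      simp
  -- the window set
  set W : Finset (ZMod (n * N)) :=
    Finset.univ.filter (fun k => ∃ t, t < b ∧ c (k + (t : ZMod (n * N))) ≠ 0) with hW
  have hbwt : bwt (n * N) b c = W.card := rfl
  -- first-nonzero map
  set G : ZMod (n * N) → ZMod (n * N) := fun k =>
    if h : ∃ t, t < b ∧ c (k + (t : ZMod (n * N))) ≠ 0 then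
      k + ((Nat.find h : ℕ) : ZMod (n * N)) else k with hG
  have hGW : ∀ k ∈ W, G k ∈ supp := by
    intro k hk
    have hex : ∃ t, t < b ∧ c (k + (t : ZMod (n * N))) ≠ 0 := (Finset.mem_filter.1 hk).2
    rw [hG]
    simp only [dif_pos hex]
    exact Finset.mem_filter.2 ⟨Finset.mem_univ _, (Nat.find_spec hex).2⟩
  -- fiber bound
  have hfiber : ∀ p ∈ supp,
      1 + min (b - 1) (gapD J hJ (ρ p) - 1) ≤ (W.filter (fun k => G k = p)).card := by
    intro p hp
    have hcp : c p ≠ 0 := (Finset.mem_filter.1 hp).2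
    set m : ℕ := min (b - 1) (gapD J hJ (ρ p) - 1) with hm
    have hmb : m ≤ b - 1 := min_le_left _ _
    have hmg : m ≤ gapD J hJ (ρ p) - 1 := min_le_right _ _
    have hgpos := gapD_pos J hJ (ρ p)
    have hsub : (Finset.range (m + 1)).image (fun t : ℕ => p - (t : ZMod (n * N)))
        ⊆ W.filter (fun k => G k = p) := by
      intro x hx
      obtain ⟨t, ht, rfl⟩ := Finset.mem_image.1 hx
      rw [Finset.mem_range] at ht
      have htm : t ≤ m := by omega
      -- entries strictly before p in the window are 0
      have hbefore : ∀ s, s < t → c (p - (t : ZMod (n * N)) + (s : ZMod (n * N))) = 0 := by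
        intro s hs
        have hcast : p - (t : ZMod (n * N)) + (s : ZMod (n * N))
            = p - (((t - s : ℕ)) : ZMod (n * N)) := by
          rw [Nat.cast_sub (le_of_lt hs)]
          ring
        rw [hcast]
        apply hzero'
        rw [hρsub]
        exact gapD_min J hJ (by omega) (by omega)
      have hpt : p - (t : ZMod (n * N)) + (t : ZMod (n * N)) = p := by ring
      have hex : ∃ s, s < b ∧ c (p - (t : ZMod (n * N)) + (s : ZMod (n * N))) ≠ 0 :=
        ⟨t, by omega, by rw [hpt]; exact hcp⟩
      have hfind : Nat.find hex = t := by
        rw [Nat.find_eq_iff]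
        exact ⟨⟨by omega, by rw [hpt]; exact hcp⟩,
          fun s hs hcon => hcon.2 (hbefore s hs)⟩
      refine Finset.mem_filter.2 ⟨Finset.mem_filter.2 ⟨Finset.mem_univ _, hex⟩, ?_⟩
      rw [hG]
      simp only [dif_pos hex, hfind]
      rw [hpt]
    have hcard : ((Finset.range (m + 1)).image
        (fun t : ℕ => p - (t : ZMod (n * N)))).card = m + 1 := by
      rw [Finset.card_image_of_injOn, Finset.card_range]
      intro t ht t' ht' he
      simp only [Finset.mem_coe, Finset.mem_range] at ht ht'
      have : (t : ZMod (n * N)) = (t' : ZMod (n * N)) := sub_right_inj.mp he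
      have := congrArg ZMod.val this
      have hbM : b ≤ n * N := le_trans hbn (Nat.le_mul_of_pos_right n hNpos)
      rwa [ZMod.val_cast_of_lt (by omega), ZMod.val_cast_of_lt (by omega)] at this
    calc 1 + m = ((Finset.range (m + 1)).image (fun t : ℕ => p - (t : ZMod (n * N)))).card := by
          rw [hcard]; omega
      _ ≤ (W.filter (fun k => G k = p)).card := Finset.card_le_card hsub
  -- chain the inequalities
  have hchain : ∑ p ∈ supp, (1 + min (b - 1) (gapD J hJ (ρ p) - 1)) ≤ W.card := by
    rw [Finset.card_eq_sum_card_fiberwise hGW]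
    exact Finset.sum_le_sum hfiber
  have hgroup : ∑ p ∈ supp, (1 + min (b - 1) (gapD J hJ (ρ p) - 1))
      = ∑ i ∈ J, ℓ * (1 + min (b - 1) (gapD J hJ i - 1)) := by
    rw [← Finset.sum_fiberwise_of_maps_to hsupp_row
      (fun p => 1 + min (b - 1) (gapD J hJ (ρ p) - 1))]
    apply Finset.sum_congr rfl
    intro i hi
    rw [Finset.sum_congr rfl (fun p hp => by
      rw [(Finset.mem_filter.1 hp).2])]
    rw [Finset.sum_const, hrow' i hi, smul_eq_mul]
  -- part B : identify the hole sums
  have hminsum : (∑ H ∈ Finset.univ.filter (fun H => IsHole J H ∧ H.card ≤ b - 1), H.card)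
      + (∑ _H ∈ Finset.univ.filter (fun H => IsHole J H ∧ b ≤ H.card), (b - 1))
      = ∑ i ∈ J, min (b - 1) (gapD J hJ i - 1) := by
    rw [← sum_holes J hJ (fun x => min (b - 1) x) (by simp)]
    rw [← Finset.sum_filter_add_sum_filter_not (Finset.univ.filter (fun H => IsHole J H))
      (fun H => H.card ≤ b - 1)]
    congr 1
    · rw [Finset.filter_filter]
      apply Finset.sum_congr rfl
      intro H hH
      rw [Finset.mem_filter] at hH
      omega
    · rw [Finset.filter_filter]
      have hpred : ∀ H : Finset (ZMod n), (IsHole J H ∧ ¬ H.card ≤ b - 1) ↔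
          (IsHole J H ∧ b ≤ H.card) := by
        intro H; constructor <;> rintro ⟨h1, h2⟩ <;> exact ⟨h1, by omega⟩
      rw [Finset.filter_congr (fun H _ => hpred H)]
      apply Finset.sum_congr rfl
      intro H hH
      rw [Finset.mem_filter] at hH
      omega
  calc ℓ * (J.card
      + (∑ H ∈ Finset.univ.filter (fun H => IsHole J H ∧ H.card ≤ b - 1), H.card)
      + (∑ _H ∈ Finset.univ.filter (fun H => IsHole J H ∧ b ≤ H.card), (b - 1)))
      = ℓ * (J.card + ∑ i ∈ J, min (b - 1) (gapD J hJ i - 1)) := by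
        rw [add_assoc, hminsum]
    _ = ∑ i ∈ J, ℓ * (1 + min (b - 1) (gapD J hJ i - 1)) := by
        have expand : ∑ i ∈ J, ℓ * (1 + min (b - 1) (gapD J hJ i - 1))
            = ∑ i ∈ J, (ℓ + ℓ * min (b - 1) (gapD J hJ i - 1)) :=
          Finset.sum_congr rfl (fun i _ => by ring)
        rw [expand, Finset.sum_add_distrib, Finset.sum_const, smul_eq_mul, ← Finset.mul_sum]
        ring
    _ = ∑ p ∈ supp, (1 + min (b - 1) (gapD J hJ (ρ p) - 1)) := hgroup.symm
    _ ≤ W.card := hchain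
    _ = bwt (n * N) b c := hbwt.symm
end

section
/- Let C_1,…,C_M be codes of length n over F_q and A an M × N matrix of rank M. For 1 ≤ i ≤ M let s_i be the minimum Hamming distance of the linear code generated by the last i rows of A. Then d_b([C_1,…,C_M]·A) ≥ min{s_{M−i+1} · d_b(C_i) : i = 1,…,M}. -/
open scoped Classical
open Finset

theorem rowsIndep {F : Type*} [Field F] {M N : ℕ} (A : Matrix (Fin M) (Fin N) F) (hA : A.rank = M)
    (g : Fin M → F) (hg : ∀ t, ∑ ℓ, g ℓ * A ℓ t = 0) : g = 0 := by
  have h1 : A.transpose.rank = M := by rw [Matrix.rank_transpose, hA]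
  have h2 := A.transpose.mulVecLin.finrank_range_add_finrank_ker
  rw [Matrix.rank] at h1
  rw [h1] at h2
  simp only [Module.finrank_pi, Fintype.card_fin] at h2
  have hker : LinearMap.ker A.transpose.mulVecLin = ⊥ := by
    apply Submodule.finrank_eq_zero.mp; omega
  have hm : A.transpose.mulVecLin g = 0 := by
    ext t
    simp only [Matrix.mulVecLin_apply, Matrix.mulVec, dotProduct, Matrix.transpose_apply,
      Pi.zero_apply]
    rw [← hg t]
    exact Finset.sum_congr rfl fun ℓ _ => mul_comm _ _
  have := hker ▸ LinearMap.mem_ker.mpr hm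
  simpa using this

theorem mp_lt {n N : ℕ} [NeZero n] [NeZero N] (r : ZMod n) (t : Fin N) :
    r.val + n * t.val < n * N := by
  have h1 : r.val < n := ZMod.val_lt r
  have h2 : t.val + 1 ≤ N := t.isLt
  calc r.val + n * t.val < n + n * t.val := by omega
    _ = n * (t.val + 1) := by ring
    _ ≤ n * N := Nat.mul_le_mul_left n h2

theorem mpVec_eval {F : Type*} [Field F] (n N M : ℕ) [NeZero n] [NeZero N]
    (A : Matrix (Fin M) (Fin N) F) (x : Fin M → ZMod n → F) (r : ZMod n) (t : Fin N) :
    mpVec n N M A x (((r.val + n * t.val : ℕ) : ZMod (n * N))) = ∑ ℓ, x ℓ r * A ℓ t := by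
  have hlt := mp_lt r t
  have hval : ((((r.val + n * t.val : ℕ)) : ZMod (n * N))).val = r.val + n * t.val :=
    ZMod.val_cast_of_lt hlt
  unfold mpVec
  have hmod : (r.val + n * t.val) % n = r.val := by
    rw [Nat.mul_comm, Nat.add_mul_mod_self_right, Nat.mod_eq_of_lt (ZMod.val_lt r)]
  have hdiv : (r.val + n * t.val) / n = t.val := by
    rw [Nat.add_mul_div_left _ _ (Nat.pos_of_ne_zero (NeZero.ne n)),
      Nat.div_eq_of_lt (ZMod.val_lt r), Nat.zero_add]
  apply Finset.sum_congr rfl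
  intro ℓ _
  congr 1
  · rw [hval, hmod, ZMod.natCast_val, ZMod.cast_id]
  · congr 1
    apply Fin.ext
    simp only [hval]
    exact hdiv

theorem mpVec_sub {F : Type*} [Field F] (n N M : ℕ) [NeZero n] [NeZero N]
    (A : Matrix (Fin M) (Fin N) F) (c c' : Fin M → ZMod n → F) :
    mpVec n N M A c - mpVec n N M A c' = mpVec n N M A (fun ℓ => c ℓ - c' ℓ) := by
  funext k
  simp [mpVec, ← Finset.sum_sub_distrib, sub_mul]

theorem stmt6_key {F : Type*} [Field F] {n N M b : ℕ} [NeZero n] [NeZero N]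
    (A : Matrix (Fin M) (Fin N) F) (hA : A.rank = M)
    (C : Fin M → Set (ZMod n → F)) (c c' : Fin M → ZMod n → F)
    (hc : ∀ ℓ, c ℓ ∈ C ℓ) (hc' : ∀ ℓ, c' ℓ ∈ C ℓ) (hne : c ≠ c') :
    sInf {w | ∃ i : Fin M,
        w = minHamming ((Submodule.span F {v | ∃ ℓ : Fin M, i ≤ ℓ ∧ v = A ℓ} :
              Submodule F (Fin N → F)) : Set (Fin N → F)) * bDist n b (C i)}
      ≤ bwt (n * N) b (mpVec n N M A c - mpVec n N M A c') := by
  classical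
  rw [mpVec_sub]
  set x : Fin M → ZMod n → F := fun ℓ => c ℓ - c' ℓ with hxdef
  have hPf : (Finset.univ.filter (fun ℓ : Fin M => x ℓ ≠ 0)).Nonempty := by
    rcases Function.ne_iff.mp hne with ⟨ℓ, hℓ⟩
    exact ⟨ℓ, Finset.mem_filter.mpr ⟨Finset.mem_univ _, sub_ne_zero.mpr hℓ⟩⟩
  set i : Fin M := (Finset.univ.filter (fun ℓ : Fin M => x ℓ ≠ 0)).min' hPf with hidef
  have hi : x i ≠ 0 :=
    (Finset.mem_filter.mp ((Finset.univ.filter (fun ℓ : Fin M => x ℓ ≠ 0)).min'_mem hPf)).2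
  have hmin : ∀ ℓ : Fin M, ℓ < i → x ℓ = 0 := by
    intro ℓ hℓ
    by_contra h
    exact absurd (Finset.min'_le _ ℓ (Finset.mem_filter.mpr ⟨Finset.mem_univ _, h⟩))
      (not_le.mpr hℓ)
  set V : Submodule F (Fin N → F) :=
    Submodule.span F {v | ∃ ℓ : Fin M, i ≤ ℓ ∧ v = A ℓ} with hVdef
  set s : ℕ := minHamming (V : Set (Fin N → F)) with hsdef
  set S : Finset (ZMod n) :=
    Finset.univ.filter (fun rr : ZMod n => ∃ j < b, x i (rr + (j : ZMod n)) ≠ 0) with hSdef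
  set T : Finset (ZMod (n * N)) :=
    Finset.univ.filter
      (fun k : ZMod (n * N) => ∃ j < b, mpVec n N M A x (k + (j : ZMod (n * N))) ≠ 0) with hTdef
  have hbwtT : bwt (n * N) b (mpVec n N M A x) = T.card := rfl
  have hbwtS : bwt n b (x i) = S.card := rfl
  -- the b-dist of C i is at most S.card
  have hstepA : bDist n b (C i) ≤ S.card := by
    apply Nat.sInf_le
    refine ⟨c i, hc i, c' i, hc' i, sub_ne_zero.mp hi, hbwtS⟩
  -- main counting
  set g : ZMod (n * N) →+* ZMod n := ZMod.castHom (dvd_mul_right n N) (ZMod n) with hgdef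
  have hfiber : ∀ r ∈ S, s ≤ (T.filter (fun k => g k = r)).card := by
    intro r hr
    obtain ⟨j, hj, hxij⟩ := (Finset.mem_filter.mp hr).2
    set r' : ZMod n := r + (j : ZMod n) with hr'def
    set y : Fin N → F := fun t => ∑ ℓ, x ℓ r' * A ℓ t with hydef
    have hy_eq : y = ∑ ℓ, x ℓ r' • A ℓ := by
      funext t
      simp [hydef, Finset.sum_apply]
    have hy_mem : y ∈ V := by
      rw [hy_eq]
      apply Submodule.sum_mem
      intro ℓ _
      by_cases hℓ : i ≤ ℓ
      · exact Submodule.smul_mem _ _ (Submodule.subset_span ⟨ℓ, hℓ, rfl⟩)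
      · rw [hmin ℓ (lt_of_not_ge hℓ)]
        simp
    have hy_ne : y ≠ 0 := by
      intro h0
      exact hxij (congrFun (rowsIndep A hA (fun ℓ => x ℓ r') (fun t => congrFun h0 t)) i)
    have hs_le : s ≤ hammingNorm y := Nat.sInf_le ⟨y, hy_mem, hy_ne, rfl⟩
    set U : Finset (Fin N) := Finset.univ.filter (fun t => y t ≠ 0) with hUdef
    have hUcard : hammingNorm y = U.card := rfl
    set κ : Fin N → ZMod (n * N) :=
      fun t => ((r'.val + n * t.val : ℕ) : ZMod (n * N)) - ((j : ℕ) : ZMod (n * N)) with hκdef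
    have himg : U.image κ ⊆ T.filter (fun k => g k = r) := by
      intro k hk
      obtain ⟨t, ht, rfl⟩ := Finset.mem_image.mp hk
      have htne : y t ≠ 0 := (Finset.mem_filter.mp ht).2
      refine Finset.mem_filter.mpr ⟨Finset.mem_filter.mpr ⟨Finset.mem_univ _, ?_⟩, ?_⟩
      · refine ⟨j, hj, ?_⟩
        have : κ t + ((j : ℕ) : ZMod (n * N)) = ((r'.val + n * t.val : ℕ) : ZMod (n * N)) := by
          rw [hκdef]; ring
        rw [this, mpVec_eval]
        exact htne
      · have : g (κ t) = ((r'.val + n * t.val : ℕ) : ZMod n) - ((j : ℕ) : ZMod n) := by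
          rw [hκdef, map_sub, map_natCast, map_natCast]
        rw [this]
        push_cast
        rw [ZMod.natCast_val, ZMod.cast_id, ZMod.natCast_self]
        rw [hr'def]
        ring
    have hinj : Set.InjOn κ U := by
      intro t1 _ t2 _ h
      have h2 : ((r'.val + n * t1.val : ℕ) : ZMod (n * N)) =
          ((r'.val + n * t2.val : ℕ) : ZMod (n * N)) := by
        have := congrArg (fun z => z + ((j : ℕ) : ZMod (n * N))) h
        simpa [hκdef, sub_add_cancel] using this
      have h3 : r'.val + n * t1.val = r'.val + n * t2.val := by
        have := congrArg ZMod.val h2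
        rwa [ZMod.val_cast_of_lt (mp_lt r' t1), ZMod.val_cast_of_lt (mp_lt r' t2)] at this
      have hn : 0 < n := Nat.pos_of_ne_zero (NeZero.ne n)
      exact Fin.ext (Nat.eq_of_mul_eq_mul_left hn (Nat.add_left_cancel h3))
    calc s ≤ U.card := hUcard ▸ hs_le
      _ = (U.image κ).card := (Finset.card_image_of_injOn hinj).symm
      _ ≤ (T.filter (fun k => g k = r)).card := Finset.card_le_card himg
  have hdisj : ∀ r1 ∈ S, ∀ r2 ∈ S, r1 ≠ r2 →
      Disjoint (T.filter (fun k => g k = r1)) (T.filter (fun k => g k = r2)) := by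
    intro r1 _ r2 _ h12
    apply Finset.disjoint_left.mpr
    intro k hk1 hk2
    exact h12 ((Finset.mem_filter.mp hk1).2 ▸ (Finset.mem_filter.mp hk2).2 ▸ rfl)
  have hstepB : s * S.card ≤ T.card := by
    calc s * S.card = ∑ _r ∈ S, s := by rw [Finset.sum_const, smul_eq_mul, Nat.mul_comm]
      _ ≤ ∑ r ∈ S, (T.filter (fun k => g k = r)).card := Finset.sum_le_sum hfiber
      _ = (S.biUnion (fun r => T.filter (fun k => g k = r))).card :=
          (Finset.card_biUnion hdisj).symm
      _ ≤ T.card := Finset.card_le_card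
          (Finset.biUnion_subset.mpr fun r _ => Finset.filter_subset _ _)
  calc sInf {w | ∃ i : Fin M,
        w = minHamming ((Submodule.span F {v | ∃ ℓ : Fin M, i ≤ ℓ ∧ v = A ℓ} :
              Submodule F (Fin N → F)) : Set (Fin N → F)) * bDist n b (C i)}
      ≤ s * bDist n b (C i) := Nat.sInf_le ⟨i, rfl⟩
    _ ≤ s * S.card := Nat.mul_le_mul_left s hstepA
    _ ≤ T.card := hstepB

theorem mpVec_ne_zero {F : Type*} [Field F] {n N M : ℕ} [NeZero n] [NeZero N]
    (A : Matrix (Fin M) (Fin N) F) (hA : A.rank = M) (x : Fin M → ZMod n → F)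
    (i : Fin M) (r : ZMod n) (h : x i r ≠ 0) : mpVec n N M A x ≠ 0 := by
  intro h0
  apply h
  have hg : ∀ t : Fin N, ∑ ℓ, x ℓ r * A ℓ t = 0 := by
    intro t
    have := congrFun h0 (((r.val + n * t.val : ℕ) : ZMod (n * N)))
    rwa [mpVec_eval] at this
  exact congrFun (rowsIndep A hA (fun ℓ => x ℓ r) hg) i

/-- `d_b([C_1,…,C_M]·A) ≥ min{s_{M-i+1} · d_b(C_i)}` where
`s_{M-i+1}` is the minimum Hamming distance of the span of the last `M-i+1`
rows of `A` (rows `i, i+1, …, M`). -/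
theorem stmt6 {F : Type*} [Field F] {n N M b : ℕ} [NeZero n] [NeZero N]
    (hMN : M ≤ N) (hb1 : 1 ≤ b) (hbn : b ≤ n)
    (A : Matrix (Fin M) (Fin N) F) (hA : A.rank = M)
    (C : Fin M → Set (ZMod n → F)) (hC : ∀ ℓ, (C ℓ).Nonempty) :
    sInf {w | ∃ i : Fin M,
        w = minHamming ((Submodule.span F {v | ∃ ℓ : Fin M, i ≤ ℓ ∧ v = A ℓ} :
              Submodule F (Fin N → F)) : Set (Fin N → F)) * bDist n b (C i)}
      ≤ bDist (n * N) b (mpCode n N M A C) := by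
  classical
  by_cases hM : M = 0
  · subst hM
    have hempty : {w | ∃ i : Fin 0,
        w = minHamming ((Submodule.span F {v | ∃ ℓ : Fin 0, i ≤ ℓ ∧ v = A ℓ} :
              Submodule F (Fin N → F)) : Set (Fin N → F)) * bDist n b (C i)} = (∅ : Set ℕ) := by
      ext w
      simp only [Set.mem_empty_iff_false, iff_false, Set.mem_setOf_eq]
      rintro ⟨i, -⟩
      exact i.elim0
    rw [hempty, Nat.sInf_empty]
    exact Nat.zero_le _
  · set D := {w | ∃ u ∈ mpCode n N M A C, ∃ v ∈ mpCode n N M A C,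
        u ≠ v ∧ bwt (n * N) b (u - v) = w} with hD
    have hbd : bDist (n * N) b (mpCode n N M A C) = sInf D := rfl
    by_cases hDne : D.Nonempty
    · obtain ⟨u, hu, v, hv, huv, hw⟩ := Nat.sInf_mem hDne
      rw [hbd, ← hw]
      obtain ⟨c, hcc, rfl⟩ := hu
      obtain ⟨c', hcc', rfl⟩ := hv
      apply stmt6_key A hA C c c' hcc hcc'
      intro h
      exact huv (by rw [h])
    · rw [hbd, Set.not_nonempty_iff_eq_empty.mp hDne, Nat.sInf_empty]
      apply Nat.sInf_le
      have hMpos : 0 < M := Nat.pos_of_ne_zero hM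
      refine ⟨⟨0, hMpos⟩, ?_⟩
      have hCdist : bDist n b (C ⟨0, hMpos⟩) = 0 := by
        rw [bDist]
        have hset : {w | ∃ u ∈ C ⟨0, hMpos⟩, ∃ v ∈ C ⟨0, hMpos⟩, u ≠ v ∧ bwt n b (u - v) = w}
            = (∅ : Set ℕ) := by
          apply Set.eq_empty_iff_forall_notMem.mpr
          rintro w ⟨u', hu', v', hv', hne', -⟩
          set i0 : Fin M := ⟨0, hMpos⟩ with hi0
          set c0 : Fin M → ZMod n → F := fun ℓ => (hC ℓ).choose with hc0
          set ca := Function.update c0 i0 u' with hca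
          set cb := Function.update c0 i0 v' with hcb
          have hmema : ∀ ℓ, ca ℓ ∈ C ℓ := by
            intro ℓ
            by_cases h : ℓ = i0
            · subst h; simp only [hca, Function.update_self]; exact hu'
            · simp only [hca, Function.update_of_ne h]; exact (hC ℓ).choose_spec
          have hmemb : ∀ ℓ, cb ℓ ∈ C ℓ := by
            intro ℓ
            by_cases h : ℓ = i0
            · subst h; simp only [hcb, Function.update_self]; exact hv'
            · simp only [hcb, Function.update_of_ne h]; exact (hC ℓ).choose_spec
          obtain ⟨r, hr⟩ := Function.ne_iff.mp hne'
          have hx : (fun ℓ => ca ℓ - cb ℓ) i0 r ≠ 0 := by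
            simp only [hca, hcb, Function.update_self]
            exact sub_ne_zero.mpr hr
          have hne2 : mpVec n N M A ca ≠ mpVec n N M A cb := by
            intro hEq
            apply mpVec_ne_zero A hA (fun ℓ => ca ℓ - cb ℓ) i0 r hx
            rw [← mpVec_sub, hEq, sub_self]
          have : (bwt (n * N) b (mpVec n N M A ca - mpVec n N M A cb)) ∈ D :=
            ⟨mpVec n N M A ca, ⟨ca, hmema, rfl⟩, mpVec n N M A cb, ⟨cb, hmemb, rfl⟩, hne2, rfl⟩
          exact (Set.not_nonempty_iff_eq_empty.mpr (Set.not_nonempty_iff_eq_empty.mp hDne ▸ rfl))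
            ⟨_, this⟩ |>.elim
        rw [hset, Nat.sInf_empty]
      rw [hCdist, Nat.mul_zero]
end
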